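/- arXiv:1509.06238 — 3 statements merged into one kernel-verified Lean document; each statement's English description precedes it below -/
import Mathlib

section
/- Let S be a 2-dimensional subspace of ℝ³ with orthonormal basis {e₁, e₂}, let x ∈ ℝ³ with r = |x| > 0, and let f_t(x) = √(1 + 2t/r²) x for t ≥ 0. Then the Jacobian of f_t restricted to S at x, namely √(det((df_t|_S)ᵀ (df_t|_S))), equals √(1 + [(1 + 2t/r²)² − 1] |∇^⊥ r|²), where ∇^⊥ r is the component of the unit radial vector x/r orthogonal to S. -/
/-!
Write `c = 1 + 2t/r²`, `a = √c` and `uᵢ = ⟪x, eᵢ⟫`. Differentiating the radial map gives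
`df_t(v) = a v + k ⟪x, v⟫ x` with `a k = -2t/r⁴`, so the Gram matrix on `S` is `c I + β u uᵀ`
with `β = 2ak + k²r²`, and its determinant is `c² + c β |u|²`. By Pythagoras
`|u|² = r² (1 - |∇^⊥ r|²)`, and `c β r² = 1 - c²`; substituting gives `1 + (c² - 1) |∇^⊥ r|²`.
-/

open scoped RealInnerProductSpace

variable {E : Type*} [NormedAddCommGroup E] [InnerProductSpace ℝ E]

theorem hasFDerivAt_inv_norm_sq {x : E} (hx : x ≠ 0) :
    HasFDerivAt (fun y : E => (‖y‖ ^ 2)⁻¹) ((-2 / ‖x‖ ^ 4) • innerSL ℝ x) x := by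
  have h := (hasDerivAt_inv (pow_ne_zero 2 (norm_ne_zero_iff.mpr hx))).comp_hasFDerivAt x
    (hasStrictFDerivAt_norm_sq x).hasFDerivAt
  refine h.congr_fderiv ?_
  ext v
  simp only [neg_smul, neg_apply, smul_apply, coe_innerSL_apply, nsmul_eq_mul, Nat.cast_ofNat,
    smul_eq_mul]
  field_simp

theorem fderiv_sqrt_one_add_div_norm_sq_smul_apply {x : E} (hx : x ≠ 0) {t : ℝ}
    (hc : 0 < 1 + 2 * t / ‖x‖ ^ 2) (v : E) :
    fderiv ℝ (fun y : E => √(1 + 2 * t / ‖y‖ ^ 2) • y) x v =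
      √(1 + 2 * t / ‖x‖ ^ 2) • v
        + (-(2 * t) / (√(1 + 2 * t / ‖x‖ ^ 2) * ‖x‖ ^ 4) * ⟪x, v⟫) • x := by
  have hscal : HasFDerivAt (fun y : E => 1 + 2 * t / ‖y‖ ^ 2)
      ((2 * t) • (-2 / ‖x‖ ^ 4) • innerSL ℝ x) x := by
    simpa only [div_eq_mul_inv] using
      ((hasFDerivAt_inv_norm_sq hx).const_mul (2 * t)).const_add 1
  have h : HasFDerivAt (fun y : E => √(1 + 2 * t / ‖y‖ ^ 2) • y) _ x :=
    (hscal.sqrt hc.ne').fun_smul (hasFDerivAt_id x)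
  have ha : √(1 + 2 * t / ‖x‖ ^ 2) ≠ 0 := (Real.sqrt_pos.mpr hc).ne'
  rw [h.fderiv]
  simp only [add_apply, smul_apply, ContinuousLinearMap.id_apply,
    ContinuousLinearMap.smulRight_apply, coe_innerSL_apply, smul_eq_mul]
  congr 2
  field_simp

theorem inner_add_smul_inner_smul (a k : ℝ) (x v w : E) :
    ⟪a • v + (k * ⟪x, v⟫) • x, a • w + (k * ⟪x, w⟫) • x⟫ =
      a ^ 2 * ⟪v, w⟫ + (2 * a * k + k ^ 2 * ‖x‖ ^ 2) * (⟪x, v⟫ * ⟪x, w⟫) := by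
  simp only [inner_add_left, inner_add_right, real_inner_smul_left, real_inner_smul_right,
    real_inner_self_eq_norm_sq, real_inner_comm x]
  ring

theorem det_gram_add_smul_inner_smul_of_orthonormal {e : Fin 2 → E} (he : Orthonormal ℝ e)
    (a k : ℝ) (x : E) :
    (Matrix.of fun i j : Fin 2 =>
        ⟪a • e i + (k * ⟪x, e i⟫) • x, a • e j + (k * ⟪x, e j⟫) • x⟫).det =
      a ^ 4 + a ^ 2 * (2 * a * k + k ^ 2 * ‖x‖ ^ 2) * (⟪x, e 0⟫ ^ 2 + ⟪x, e 1⟫ ^ 2) := by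
  simp only [Matrix.det_fin_two, Matrix.of_apply, inner_add_smul_inner_smul,
    orthonormal_iff_ite.mp he, Fin.isValue, ↓reduceIte, zero_ne_one, one_ne_zero]
  ring

theorem norm_sub_orthogonalProjectionOnto_sq_of_orthonormal {ι : Type*} [Fintype ι]
    {e : ι → E} (he : Orthonormal ℝ e) {S : Submodule ℝ E} [S.HasOrthogonalProjection]
    (hspan : Submodule.span ℝ (Set.range e) = S) (y : E) :
    ‖y - (S.orthogonalProjectionOnto y : E)‖ ^ 2 = ‖y‖ ^ 2 - ∑ i, ⟪e i, y⟫ ^ 2 := by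
  subst hspan
  have hcoe : ⇑(Module.Basis.span he.linearIndependent) =
      fun i => ⟨e i, Submodule.subset_span (Set.mem_range_self i)⟩ :=
    funext (Module.Basis.span_apply _)
  let b := (Module.Basis.span he.linearIndependent).toOrthonormalBasis
    (hcoe ▸ orthonormal_span he)
  have hproj : ‖(Submodule.span ℝ (Set.range e)).starProjection y‖ ^ 2 = ∑ i, ⟪e i, y⟫ ^ 2 :=
    calc _ = ‖(Submodule.span ℝ (Set.range e)).orthogonalProjectionOnto y‖ ^ 2 := rfl
      _ = _ := (b.sum_sq_inner_right _).symm
      _ = _ := by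
        simp only [Submodule.inner_orthogonalProjectionOnto_eq_of_mem_left, b,
          Module.Basis.coe_toOrthonormalBasis, hcoe]
  rw [← Submodule.starProjection_apply, Submodule.norm_sq_eq_add_norm_sq_starProjection y
    (Submodule.span ℝ (Set.range e)), Submodule.starProjection_orthogonal_val, hproj]
  ring

theorem sq_sq_add_mul_eq_of_sq_eq_of_mul_eq {a k r t W : ℝ} (hr : r ≠ 0)
    (ha2 : a ^ 2 = 1 + 2 * t / r ^ 2) (hak : a * k = -(2 * t) / r ^ 4) :
    a ^ 4 + a ^ 2 * (2 * a * k + k ^ 2 * r ^ 2) * W =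
      1 + ((1 + 2 * t / r ^ 2) ^ 2 - 1) * (1 - W / r ^ 2) :=
  calc a ^ 4 + a ^ 2 * (2 * a * k + k ^ 2 * r ^ 2) * W
      = (a ^ 2) ^ 2 + (2 * a ^ 2 * (a * k) + (a * k) ^ 2 * r ^ 2) * W := by ring
    _ = _ := by
      rw [ha2, hak]
      field_simp
      ring

theorem stmt2_general (S : Submodule ℝ (EuclideanSpace ℝ (Fin 3)))
    (e : Fin 2 → EuclideanSpace ℝ (Fin 3))
    (he : Orthonormal ℝ e)
    (hspan : Submodule.span ℝ (Set.range e) = S)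
    (x : EuclideanSpace ℝ (Fin 3)) (hx : x ≠ 0) (t : ℝ) (ht : 0 ≤ t)
    (f : ℝ → EuclideanSpace ℝ (Fin 3) → EuclideanSpace ℝ (Fin 3))
    (hf : ∀ s y, f s y = Real.sqrt (1 + 2 * s / ‖y‖ ^ 2) • y) :
    Real.sqrt (Matrix.det (Matrix.of fun i j : Fin 2 =>
        ⟪fderiv ℝ (f t) x (e i), fderiv ℝ (f t) x (e j)⟫))
      = Real.sqrt (1 + ((1 + 2 * t / ‖x‖ ^ 2) ^ 2 - 1) *
          ‖(‖x‖⁻¹ • x) - (S.orthogonalProjectionOnto (‖x‖⁻¹ • x) :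
            EuclideanSpace ℝ (Fin 3))‖ ^ 2) := by
  have hr : ‖x‖ ≠ 0 := norm_ne_zero_iff.mpr hx
  have hc : 0 < 1 + 2 * t / ‖x‖ ^ 2 := by positivity
  have hperp : ‖‖x‖⁻¹ • x - (S.orthogonalProjectionOnto (‖x‖⁻¹ • x) :
      EuclideanSpace ℝ (Fin 3))‖ ^ 2 = 1 - (⟪x, e 0⟫ ^ 2 + ⟪x, e 1⟫ ^ 2) / ‖x‖ ^ 2 := by
    rw [norm_sub_orthogonalProjectionOnto_sq_of_orthonormal he hspan, norm_smul, norm_inv,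
      norm_norm, inv_mul_cancel₀ hr, Fin.sum_univ_two, real_inner_smul_right,
      real_inner_smul_right, real_inner_comm x, real_inner_comm x]
    field_simp
  rw [funext (hf t)]
  simp only [fderiv_sqrt_one_add_div_norm_sq_smul_apply hx hc]
  rw [det_gram_add_smul_inner_smul_of_orthonormal he, hperp]
  congr 1
  have ha : √(1 + 2 * t / ‖x‖ ^ 2) ≠ 0 := (Real.sqrt_pos.mpr hc).ne'
  exact sq_sq_add_mul_eq_of_sq_eq_of_mul_eq hr (Real.sq_sqrt hc.le) (by field_simp)

/-- Jacobian of `f_t(x) = √(1 + 2t/r²) x` restricted to a 2-plane `S`: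
`√(det((df_t|_S)ᵀ(df_t|_S))) = √(1 + [(1+2t/r²)² − 1]|∇^⊥ r|²)`. -/
theorem stmt2 (S : Submodule ℝ (EuclideanSpace ℝ (Fin 3)))
    (hS : Module.finrank ℝ S = 2)
    (e : Fin 2 → EuclideanSpace ℝ (Fin 3))
    (he : Orthonormal ℝ e) (heS : ∀ i, e i ∈ S)
    (hspan : Submodule.span ℝ (Set.range e) = S)
    (x : EuclideanSpace ℝ (Fin 3)) (hx : x ≠ 0) (t : ℝ) (ht : 0 ≤ t)
    (f : ℝ → EuclideanSpace ℝ (Fin 3) → EuclideanSpace ℝ (Fin 3))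
    (hf : ∀ s y, f s y = Real.sqrt (1 + 2 * s / ‖y‖ ^ 2) • y) :
    Real.sqrt (Matrix.det (Matrix.of fun i j : Fin 2 =>
        ⟪fderiv ℝ (f t) x (e i), fderiv ℝ (f t) x (e j)⟫))
      = Real.sqrt (1 + ((1 + 2 * t / ‖x‖ ^ 2) ^ 2 - 1) *
          ‖(‖x‖⁻¹ • x) - (S.orthogonalProjectionOnto (‖x‖⁻¹ • x) :
            EuclideanSpace ℝ (Fin 3))‖ ^ 2) :=
  stmt2_general S e he hspan x hx t ht f hf
end

section
/- Let X(x) = φ(r/ρ) x/r² on ℝ³, where ρ > 0, r = |x|, and φ : ℝ → [0,∞) is smooth with φ = 0 on (−∞,1], φ = 1 on [2,∞), and 0 ≤ φ' ≤ 1 + ε for small ε > 0. Then the total derivative satisfies ‖DX‖_{L∞} ≤ (4 + ε)/ρ². In particular, if ρ > 3 then ‖DX‖_{L∞} ≤ 1. -/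
open Real

/-- derivative of the norm on an inner product space at a nonzero point -/
lemma hasFDerivAt_norm' {E : Type*} [NormedAddCommGroup E] [InnerProductSpace ℝ E]
    {x : E} (hx : x ≠ 0) :
    HasFDerivAt (fun y : E => ‖y‖) (‖x‖⁻¹ • innerSL ℝ x) x := by
  have h1 : HasFDerivAt (fun y : E => ‖y‖ ^ 2) (2 • innerSL ℝ x) x :=
    (hasStrictFDerivAt_norm_sq x).hasFDerivAt
  have hne : (‖x‖ : ℝ) ^ 2 ≠ 0 := pow_ne_zero 2 (norm_ne_zero_iff.2 hx)
  have h2 : HasDerivAt Real.sqrt (1 / (2 * Real.sqrt (‖x‖ ^ 2))) (‖x‖ ^ 2) :=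
    Real.hasDerivAt_sqrt hne
  have h3 := h2.comp_hasFDerivAt x h1
  have hxpos : (0:ℝ) < ‖x‖ := norm_pos_iff.2 hx
  have heq : (Real.sqrt ∘ fun y : E => ‖y‖ ^ 2) = fun y : E => ‖y‖ := by
    funext y; simp [Function.comp, Real.sqrt_sq (norm_nonneg y)]
  rw [heq] at h3
  refine h3.congr_fderiv ?_
  rw [Real.sqrt_sq (norm_nonneg x), ← Nat.cast_smul_eq_nsmul ℝ 2 (innerSL ℝ x), smul_smul]
  congr 1
  push_cast
  field_simp

set_option maxHeartbeats 1000000 in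
set_option synthInstance.maxHeartbeats 1000000 in
/-- Let `X(x) = φ(r/ρ) x/r²` with `ρ > 0`, `φ` smooth, `φ = 0` on `(-∞,1]`, `φ = 1` on
`[2,∞)` and `0 ≤ φ' ≤ 1+ε` for a small `ε > 0`. Then `‖DX‖_{L∞} ≤ (4+ε)/ρ²`; in
particular if `ρ > 3` then `‖DX‖_{L∞} ≤ 1`. -/
theorem stmt14 (ρ ε : ℝ) (hρ : 0 < ρ) (hε : 0 < ε) (hε1 : ε ≤ 1)
    (φ : ℝ → ℝ) (hφsmooth : ContDiff ℝ (⊤ : ℕ∞) φ)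
    (hφ0 : ∀ s ≤ (1 : ℝ), φ s = 0) (hφ1 : ∀ s ≥ (2 : ℝ), φ s = 1)
    (hφ' : ∀ s, 0 ≤ deriv φ s ∧ deriv φ s ≤ 1 + ε)
    (X : EuclideanSpace ℝ (Fin 3) → EuclideanSpace ℝ (Fin 3))
    (hX : ∀ x, X x = φ (‖x‖ / ρ) • (‖x‖ ^ 2)⁻¹ • x) :
    ∀ x, ‖fderiv ℝ X x‖ ≤ (4 + ε) / ρ ^ 2 ∧ (3 < ρ → ‖fderiv ℝ X x‖ ≤ 1) := by
  have hρ2 : (0:ℝ) < ρ ^ 2 := by positivity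
  -- φ is monotone and bounded between 0 and 1
  have hφdiff : Differentiable ℝ φ := hφsmooth.differentiable (by simp)
  have hmono : Monotone φ := monotone_of_deriv_nonneg hφdiff fun s => (hφ' s).1
  have hφ_nonneg : ∀ s, 0 ≤ φ s := by
    intro s
    rcases le_total s 1 with h | h
    · rw [hφ0 s h]
    · rw [← hφ0 1 le_rfl]; exact hmono h
  have hφ_le_one : ∀ s, φ s ≤ 1 := by
    intro s
    rcases le_total s 2 with h | h
    · rw [← hφ1 2 le_rfl]; exact hmono h
    · rw [hφ1 s h]
  -- main bound
  have main : ∀ x, ‖fderiv ℝ X x‖ ≤ (4 + ε) / ρ ^ 2 := by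
    intro x
    rcases lt_or_ge ‖x‖ ρ with hxρ | hxρ
    · -- X vanishes in a neighborhood of x
      have hzero : X =ᶠ[nhds x] fun _ => (0 : EuclideanSpace ℝ (Fin 3)) := by
        have : Metric.ball (0 : EuclideanSpace ℝ (Fin 3)) ρ ∈ nhds x := by
          apply Metric.isOpen_ball.mem_nhds
          simpa [Metric.mem_ball, dist_zero_right] using hxρ
        filter_upwards [this] with y hy
        have hy' : ‖y‖ < ρ := by simpa [Metric.mem_ball, dist_zero_right] using hy
        have : ‖y‖ / ρ ≤ 1 := by
          rw [div_le_one hρ]; exact hy'.le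
        rw [hX y, hφ0 _ this, zero_smul]
      rw [hzero.fderiv_eq, fderiv_const_apply]
      simp only [Pi.zero_apply, norm_zero]
      positivity
    · -- ‖x‖ ≥ ρ > 0
      set r : ℝ := ‖x‖ with hr
      have hrpos : (0:ℝ) < r := lt_of_lt_of_le hρ hxρ
      have hxne : x ≠ 0 := by
        simpa [hr] using norm_pos_iff.mp hrpos
      -- scalar function g
      set s : ℝ := r / ρ with hs
      have hs1 : 1 ≤ s := (le_div_iff₀ hρ).2 (by simpa using hxρ)
      have hr2ne : r ^ 2 ≠ 0 := pow_ne_zero 2 hrpos.ne'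
      -- derivative of g t = φ (t/ρ) * (t^2)⁻¹ at t = r
      have hφr : HasDerivAt (fun t : ℝ => φ (t / ρ)) (deriv φ s * ρ⁻¹) r := by
        have h1 : HasDerivAt φ (deriv φ s) (r / ρ) := (hφdiff (r/ρ)).hasDerivAt
        have h2 : HasDerivAt (fun t : ℝ => t / ρ) ρ⁻¹ r := by
          simpa [div_eq_mul_inv] using (hasDerivAt_id r).mul_const ρ⁻¹
        exact h1.comp r h2
      have hinv : HasDerivAt (fun t : ℝ => (t ^ 2)⁻¹) (-(2 * r) / (r ^ 2) ^ 2) r := by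
        have := (hasDerivAt_pow 2 r).inv hr2ne
        simpa [Pi.inv_def] using this
      set g' : ℝ := deriv φ s * ρ⁻¹ * (r ^ 2)⁻¹ + φ s * (-(2 * r) / (r ^ 2) ^ 2) with hg'
      have hg : HasDerivAt (fun t : ℝ => φ (t / ρ) * (t ^ 2)⁻¹) g' r := by
        simpa [hg', Pi.mul_def] using hφr.mul hinv
      -- derivative of c y = φ (‖y‖/ρ) * (‖y‖^2)⁻¹
      have hnorm := hasFDerivAt_norm' hxne
      have hc : HasFDerivAt (fun y : EuclideanSpace ℝ (Fin 3) => φ (‖y‖ / ρ) * (‖y‖ ^ 2)⁻¹)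
          (g' • (r⁻¹ • innerSL ℝ x)) x :=
        hg.comp_hasFDerivAt (f := fun y : EuclideanSpace ℝ (Fin 3) => ‖y‖) x hnorm
      -- derivative of X
      have hXd : HasFDerivAt X
          ((φ s * (r ^ 2)⁻¹) • ContinuousLinearMap.id ℝ (EuclideanSpace ℝ (Fin 3))
            + (g' • (r⁻¹ • innerSL ℝ x)).smulRight x) x := by
        have := hc.smul (hasFDerivAt_id x)
        have hXeq : X = fun y : EuclideanSpace ℝ (Fin 3) =>
            (φ (‖y‖ / ρ) * (‖y‖ ^ 2)⁻¹) • y := by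
          funext y; rw [hX y, smul_smul]
        rw [hXeq]
        exact this
      rw [hXd.fderiv]
      -- norm bound
      have hb1 : ‖(φ s * (r ^ 2)⁻¹) • ContinuousLinearMap.id ℝ (EuclideanSpace ℝ (Fin 3))‖
          ≤ φ s * (r ^ 2)⁻¹ := by
        rw [norm_smul (φ s * (r ^ 2)⁻¹) (ContinuousLinearMap.id ℝ (EuclideanSpace ℝ (Fin 3)))]
        have : ‖ContinuousLinearMap.id ℝ (EuclideanSpace ℝ (Fin 3))‖ ≤ 1 :=
          ContinuousLinearMap.norm_id_le
        have h0 : 0 ≤ φ s * (r ^ 2)⁻¹ := mul_nonneg (hφ_nonneg s) (by positivity)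
        calc ‖φ s * (r ^ 2)⁻¹‖ * ‖ContinuousLinearMap.id ℝ (EuclideanSpace ℝ (Fin 3))‖
            ≤ ‖φ s * (r ^ 2)⁻¹‖ * 1 := by gcongr
          _ = φ s * (r ^ 2)⁻¹ := by rw [mul_one, Real.norm_eq_abs, abs_of_nonneg h0]
      have hb2 : ‖(g' • (r⁻¹ • innerSL ℝ x)).smulRight x‖ ≤ |g'| * r := by
        calc ‖(g' • (r⁻¹ • innerSL ℝ x)).smulRight x‖
            ≤ ‖g' • (r⁻¹ • innerSL ℝ x)‖ * ‖x‖ := (ContinuousLinearMap.norm_smulRight_apply _ _).le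
          _ = |g'| * (r⁻¹ * r) * r := by
              rw [norm_smul g' (r⁻¹ • innerSL ℝ x), norm_smul r⁻¹ (innerSL ℝ x), innerSL_apply_norm]
              simp [Real.norm_eq_abs, abs_of_pos (inv_pos.2 hrpos), hr]
              try ring
          _ = |g'| * r := by rw [inv_mul_cancel₀ hrpos.ne', mul_one]
      have htri := norm_add_le
        ((φ s * (r ^ 2)⁻¹) • ContinuousLinearMap.id ℝ (EuclideanSpace ℝ (Fin 3)))
        ((g' • (r⁻¹ • innerSL ℝ x)).smulRight x)
      -- scalar estimates
      have hρr : ρ ≤ r := hxρ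
      have habs : |g'| * r ≤ (1 + ε) / ρ ^ 2 + 2 / ρ ^ 2 := by
        have h1 : |g'| ≤ deriv φ s * ρ⁻¹ * (r ^ 2)⁻¹ + φ s * (2 * r) / (r ^ 2) ^ 2 := by
          rw [hg']
          refine (abs_add_le _ _).trans (add_le_add ?_ ?_)
          · rw [abs_of_nonneg (mul_nonneg (mul_nonneg (hφ' s).1 (by positivity)) (by positivity))]
          · rw [abs_of_nonpos (mul_nonpos_of_nonneg_of_nonpos (hφ_nonneg s)
              (div_nonpos_of_nonpos_of_nonneg (by nlinarith [hrpos]) (by positivity)))]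
            exact le_of_eq (by ring)
        have h2 : (deriv φ s * ρ⁻¹ * (r ^ 2)⁻¹ + φ s * (2 * r) / (r ^ 2) ^ 2) * r
            ≤ (1 + ε) / ρ ^ 2 + 2 / ρ ^ 2 := by
          have hd1 := (hφ' s).1
          have hd2 := (hφ' s).2
          have hφs0 := hφ_nonneg s
          have hφs1 := hφ_le_one s
          have e1 : deriv φ s * ρ⁻¹ * (r ^ 2)⁻¹ * r = deriv φ s / (ρ * r) := by
            field_simp
          have e2 : φ s * (2 * r) / (r ^ 2) ^ 2 * r = 2 * φ s / r ^ 2 := by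
            field_simp
          rw [add_mul, e1, e2]
          have t1 : deriv φ s / (ρ * r) ≤ (1 + ε) / ρ ^ 2 := by
            apply div_le_div₀ (by linarith) hd2 (by positivity)
            nlinarith
          have t2 : 2 * φ s / r ^ 2 ≤ 2 / ρ ^ 2 := by
            apply div_le_div₀ (by norm_num) (by nlinarith) (by positivity)
            nlinarith
          linarith
        calc |g'| * r ≤ (deriv φ s * ρ⁻¹ * (r ^ 2)⁻¹ + φ s * (2 * r) / (r ^ 2) ^ 2) * r := by
              apply mul_le_mul_of_nonneg_right h1 hrpos.le
          _ ≤ (1 + ε) / ρ ^ 2 + 2 / ρ ^ 2 := h2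
      have hcbound : φ s * (r ^ 2)⁻¹ ≤ 1 / ρ ^ 2 := by
        rw [← div_eq_mul_inv]
        apply div_le_div₀ zero_le_one (hφ_le_one s) hρ2
        nlinarith
      have : ‖(φ s * (r ^ 2)⁻¹) • ContinuousLinearMap.id ℝ (EuclideanSpace ℝ (Fin 3))
          + (g' • (r⁻¹ • innerSL ℝ x)).smulRight x‖
          ≤ 1 / ρ ^ 2 + ((1 + ε) / ρ ^ 2 + 2 / ρ ^ 2) := by
        calc _ ≤ _ := htri
          _ ≤ _ := add_le_add (hb1.trans hcbound) (hb2.trans habs)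
      calc _ ≤ (1:ℝ) / ρ ^ 2 + ((1 + ε) / ρ ^ 2 + 2 / ρ ^ 2) := this
        _ = (4 + ε) / ρ ^ 2 := by field_simp; ring
  intro x
  refine ⟨main x, fun h3 => ?_⟩
  refine (main x).trans ?_
  rw [div_le_one hρ2]
  nlinarith
end

section
/- Let V be a 2-varifold on S³ = ℝ³ ∪ {∞} of bounded mass with ‖V‖({∞}) ≥ δ > 0, and suppose ρ > 0 is chosen so that ‖V‖(B_{2ρ} \ B_ρ) ≤ δ/100. Then for the cutoff radial vector field X(x) = φ(r/ρ) x/r² (with φ as above and ε ≤ 1), the extended first variation satisfies δ_G V(X) = ∫ div^G_S X dV ≤ −(1/4)‖V‖({∞}) + 5‖V‖(B_{2ρ} \ B_ρ) < −δ/8 < 0. -/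
set_option maxHeartbeats 1000000


open MeasureTheory
open scoped RealInnerProductSpace

/-- Component of `v` orthogonal to the plane `S`. -/
noncomputable def perpPart (S : Submodule ℝ (EuclideanSpace ℝ (Fin 3)))
    (v : EuclideanSpace ℝ (Fin 3)) : EuclideanSpace ℝ (Fin 3) :=
  v - (Submodule.orthogonalProjection S v : EuclideanSpace ℝ (Fin 3))

/-- Pythagoras for the projection decomposition. -/
lemma perp_proj_norm_sq (S : Submodule ℝ (EuclideanSpace ℝ (Fin 3)))
    (v : EuclideanSpace ℝ (Fin 3)) :
    ‖v‖ * ‖v‖ = ‖perpPart S v‖ * ‖perpPart S v‖ +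
      ‖(Submodule.orthogonalProjection S v : EuclideanSpace ℝ (Fin 3))‖ *
        ‖(Submodule.orthogonalProjection S v : EuclideanSpace ℝ (Fin 3))‖ := by
  have := Submodule.orthogonalProjectionFn_norm_sq S v
  exact this

/-- Let `V` be a 2-varifold on `S³ = ℝ³ ∪ {∞}` of bounded mass, modeled by a finite
measure `μ` on `G₂(ℝ³)` together with its mass `m∞ = ‖V‖({∞}) ≥ δ > 0` at infinity,
where the extended integrand `div^G_S X` takes the constant value `−1/2` at `∞`.
If `ρ ≥ 3` is chosen so that `‖V‖(B_{2ρ} \ B_ρ) ≤ δ/100`, then for the cutoff radial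
field `X(x) = φ(r/ρ) x/r²` the extended first variation satisfies
`δ_G V(X) = ∫ div^G_S X dV + (−1/2) m∞ ≤ −(1/4) m∞ + 5 ‖V‖(B_{2ρ}\B_ρ) < −δ/8 < 0`. -/
theorem stmt16
    [MeasurableSpace {S : Submodule ℝ (EuclideanSpace ℝ (Fin 3)) //
      Module.finrank ℝ S = 2}]
    (μ : Measure ((EuclideanSpace ℝ (Fin 3)) ×
      {S : Submodule ℝ (EuclideanSpace ℝ (Fin 3)) // Module.finrank ℝ S = 2}))
    [IsFiniteMeasure μ]
    (minf δ ρ ε : ℝ) (hδ : 0 < δ) (hminf : δ ≤ minf) (hρ : 3 ≤ ρ)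
    (hε : 0 < ε) (hε1 : ε ≤ 1)
    (φ : ℝ → ℝ) (hφsmooth : ContDiff ℝ (⊤ : ℕ∞) φ) (hφnn : ∀ s, 0 ≤ φ s)
    (hφ0 : ∀ s ≤ (1 : ℝ), φ s = 0) (hφ1 : ∀ s ≥ (2 : ℝ), φ s = 1)
    (hφ' : ∀ s, 0 ≤ deriv φ s ∧ deriv φ s ≤ 1 + ε)
    (hann : (μ {p | ρ ≤ ‖p.1‖ ∧ ‖p.1‖ ≤ 2 * ρ}).toReal ≤ δ / 100)
    (divG : ((EuclideanSpace ℝ (Fin 3)) ×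
      {S : Submodule ℝ (EuclideanSpace ℝ (Fin 3)) // Module.finrank ℝ S = 2}) → ℝ)
    (hdivG : ∀ p, divG p
      = φ (‖p.1‖ / ρ) * (2 * ‖perpPart p.2.1 (‖p.1‖⁻¹ • p.1)‖ ^ 2 / ‖p.1‖ ^ 2 - 1 / 2)
        + (‖p.1‖ / ρ) * deriv φ (‖p.1‖ / ρ) *
          ‖(Submodule.orthogonalProjection p.2.1 (‖p.1‖⁻¹ • p.1) :
            EuclideanSpace ℝ (Fin 3))‖ ^ 2 / ‖p.1‖ ^ 2)
    (hInt : Integrable divG μ) :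
    (∫ p, divG p ∂μ) + (-(1 : ℝ) / 2) * minf
      ≤ -(1 / 4) * minf + 5 * (μ {p | ρ ≤ ‖p.1‖ ∧ ‖p.1‖ ≤ 2 * ρ}).toReal ∧
    -(1 / 4) * minf + 5 * (μ {p | ρ ≤ ‖p.1‖ ∧ ‖p.1‖ ≤ 2 * ρ}).toReal < -δ / 8 ∧
    -δ / 8 < 0 := by
  have hρ0 : (0:ℝ) < ρ := by linarith
  set A : Set ((EuclideanSpace ℝ (Fin 3)) ×
      {S : Submodule ℝ (EuclideanSpace ℝ (Fin 3)) // Module.finrank ℝ S = 2}) :=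
    {p | ρ ≤ ‖p.1‖ ∧ ‖p.1‖ ≤ 2 * ρ} with hA
  have hnormMeas : Measurable fun p : ((EuclideanSpace ℝ (Fin 3)) ×
      {S : Submodule ℝ (EuclideanSpace ℝ (Fin 3)) // Module.finrank ℝ S = 2}) => ‖p.1‖ :=
    measurable_fst.norm
  have hAmeas : MeasurableSet A :=
    (measurableSet_le measurable_const hnormMeas).inter
      (measurableSet_le hnormMeas measurable_const)
  -- φ is monotone, hence bounded by 1
  have hmono : Monotone φ :=
    monotone_of_deriv_nonneg (hφsmooth.differentiable (by simp)) (fun x => (hφ' x).1)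
  have hφle1 : ∀ s, φ s ≤ 1 := by
    intro s
    rcases le_or_gt s 2 with h | h
    · calc φ s ≤ φ 2 := hmono h
        _ = 1 := hφ1 2 le_rfl
    · exact (hφ1 s h.le).le
  -- deriv φ vanishes off [1,2]
  have hd0 : ∀ s < (1:ℝ), deriv φ s = 0 := by
    intro s hs
    have hev : φ =ᶠ[nhds s] fun _ => (0:ℝ) :=
      Filter.eventuallyEq_of_mem (Iio_mem_nhds hs) (fun x hx => hφ0 x (le_of_lt hx))
    rw [hev.deriv_eq]; exact deriv_const s 0
  have hd2 : ∀ s > (2:ℝ), deriv φ s = 0 := by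
    intro s hs
    have hev : φ =ᶠ[nhds s] fun _ => (1:ℝ) :=
      Filter.eventuallyEq_of_mem (Ioi_mem_nhds hs) (fun x hx => hφ1 x (le_of_lt hx))
    rw [hev.deriv_eq]; exact deriv_const s 1
  -- pointwise bound
  have hbound : ∀ p, divG p ≤ A.indicator (fun _ => (5:ℝ)) p := by
    intro p
    rw [hdivG]
    set r := ‖p.1‖ with hr
    have hr0 : 0 ≤ r := norm_nonneg _
    have hindnn : (0:ℝ) ≤ A.indicator (fun _ => (5:ℝ)) p :=
      Set.indicator_nonneg (fun _ _ => by norm_num) p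
    rcases lt_or_ge r ρ with h1 | h1
    · -- inside the ball: everything vanishes
      have hs1 : r / ρ < 1 := (div_lt_one hρ0).2 h1
      rw [hφ0 _ hs1.le, hd0 _ hs1]
      simpa using hindnn
    · -- r ≥ ρ ≥ 3 > 0, so the unit vector makes sense
      have hrpos : 0 < r := by linarith
      have hu : ‖(r⁻¹ • p.1 : EuclideanSpace ℝ (Fin 3))‖ = 1 := by
        rw [norm_smul, norm_inv, Real.norm_eq_abs, abs_of_pos hrpos, ← hr,
          inv_mul_cancel₀ (ne_of_gt hrpos)]
      have hpyth := perp_proj_norm_sq p.2.1 (r⁻¹ • p.1)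
      rw [hu] at hpyth
      set a := ‖perpPart p.2.1 (r⁻¹ • p.1)‖ with ha
      set b := ‖(Submodule.orthogonalProjection p.2.1 (r⁻¹ • p.1) :
        EuclideanSpace ℝ (Fin 3))‖ with hb
      have ha0 : 0 ≤ a := norm_nonneg _
      have hb0 : 0 ≤ b := norm_nonneg _
      have ha1 : a ^ 2 ≤ 1 := by nlinarith
      have hb1 : b ^ 2 ≤ 1 := by nlinarith
      clear_value a b
      clear ha hb hpyth hu
      have hr2 : (0:ℝ) < r ^ 2 := by positivity
      rcases le_or_gt r (2 * ρ) with h2 | h2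
      · -- the annulus: bound by 5
        have hpA : p ∈ A := ⟨h1, h2⟩
        rw [Set.indicator_of_mem hpA]
        have hterm1 : φ (r / ρ) * (2 * a ^ 2 / r ^ 2 - 1 / 2) ≤ 0 := by
          apply mul_nonpos_of_nonneg_of_nonpos (hφnn _)
          have h9 : (9:ℝ) ≤ r ^ 2 := by nlinarith
          have : 2 * a ^ 2 / r ^ 2 ≤ 2 / 9 :=
            div_le_div₀ (by norm_num) (by nlinarith) (by norm_num) h9
          linarith
        have hterm2 : (r / ρ) * deriv φ (r / ρ) * b ^ 2 / r ^ 2 ≤ 5 := by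
          have hsle : r / ρ ≤ 2 := by
            rw [div_le_iff₀ hρ0]; linarith
          have hs0 : 0 ≤ r / ρ := by positivity
          have hdle : deriv φ (r / ρ) ≤ 2 := by linarith [(hφ' (r / ρ)).2]
          have hd0' : 0 ≤ deriv φ (r / ρ) := (hφ' (r / ρ)).1
          have hsd : (r / ρ) * deriv φ (r / ρ) ≤ 4 := by nlinarith
          have hfac : 0 ≤ (r / ρ) * deriv φ (r / ρ) * (1 - b ^ 2) :=
            mul_nonneg (mul_nonneg hs0 hd0') (by linarith)
          have hnum : (r / ρ) * deriv φ (r / ρ) * b ^ 2 ≤ 4 := by nlinarith [hfac]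
          have h9 : (9:ℝ) ≤ r ^ 2 := by nlinarith
          have : (r / ρ) * deriv φ (r / ρ) * b ^ 2 / r ^ 2 ≤ 4 / 9 :=
            div_le_div₀ (by norm_num) hnum (by norm_num) h9
          linarith
        linarith
      · -- outside: integrand is ≤ 0
        have hpA : p ∉ A := by
          intro hp; exact absurd hp.2 (not_le.2 h2)
        rw [Set.indicator_of_notMem hpA]
        have hs2 : (2:ℝ) < r / ρ := by
          rw [lt_div_iff₀ hρ0]; linarith
        rw [hφ1 _ hs2.le, hd2 _ hs2]
        have h36 : (36:ℝ) ≤ r ^ 2 := by nlinarith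
        have : 2 * a ^ 2 / r ^ 2 ≤ 2 / 36 :=
          div_le_div₀ (by norm_num) (by nlinarith) (by norm_num) h36
        simp only [mul_zero, zero_mul, zero_div, add_zero, one_mul]
        linarith
  -- integrate the bound
  have hInd : Integrable (A.indicator fun _ => (5:ℝ)) μ :=
    (integrable_const (5:ℝ)).indicator hAmeas
  have hle : ∫ p, divG p ∂μ ≤ ∫ p, A.indicator (fun _ => (5:ℝ)) p ∂μ :=
    integral_mono hInt hInd hbound
  rw [integral_indicator_const _ hAmeas, smul_eq_mul, measureReal_def] at hle
  have hμ0 : 0 ≤ (μ A).toReal := ENNReal.toReal_nonneg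
  refine ⟨by linarith, by linarith, by linarith⟩
end
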